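/- Let D be a reduced connected checkerboard-colored link diagram on the sphere, staked with exactly one stake in each shaded region. Then every simple closed curve that meets the diagram transversely in exactly two points and bounds a disk containing at least one crossing has a stake in its interior. Combinatorial form: in a properly face-2-colored 4-regular plane graph with no nugatory vertices, every closed dual walk of length 2 whose interior disk contains at least one vertex has a shaded face entirely inside the disk (not touching the curve). -/
import Mathlib


/-! We model link diagrams on the sphere as combinatorial maps (rotation systems):
a finite set of darts `D`, a vertex-rotation permutation `σ`, and a fixed-point-free
edge involution `α`.  Vertices, edges and faces are the orbits of `σ`, `α` and `σ * α`
respectively; a connected map is spherical (planar) iff Euler's formula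
`V - E + F = 2` holds.  A link diagram is a 4-regular such map. -/
structure CombMap where
  D : Type
  [instFin : Fintype D]
  [instDec : DecidableEq D]
  σ : Equiv.Perm D
  α : Equiv.Perm D
  α_invol : ∀ d, α (α d) = d
  α_fpf : ∀ d, α d ≠ d

attribute [instance] CombMap.instFin CombMap.instDec

namespace CombMap

variable (m : CombMap)

/-- The setoid whose classes are the orbits (cycles) of a permutation. -/
def orbitSetoid (f : Equiv.Perm m.D) : Setoid m.D :=
  ⟨f.SameCycle, ⟨fun x => Equiv.Perm.SameCycle.refl f x, fun h => h.symm, fun h h' => h.trans h'⟩⟩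

/-- The face permutation. -/
def phi : Equiv.Perm m.D := m.σ * m.α

/-- Number of vertices: orbits of `σ`. -/
noncomputable def numVertices : ℕ := Nat.card (Quotient (m.orbitSetoid m.σ))

/-- Number of edges: orbits of `α`. -/
noncomputable def numEdges : ℕ := Nat.card (Quotient (m.orbitSetoid m.α))

/-- Number of faces: orbits of `σ * α`. -/
noncomputable def numFaces : ℕ := Nat.card (Quotient (m.orbitSetoid m.phi))

/-- The map is connected: the group generated by `σ` and `α` acts transitively on darts. -/
def Connected : Prop :=
  ∀ x y : m.D, ∃ g ∈ Subgroup.closure ({m.σ, m.α} : Set (Equiv.Perm m.D)), g x = y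

/-- The map is spherical (genus 0): Euler's formula holds. -/
def Spherical : Prop :=
  (m.numVertices : ℤ) - (m.numEdges : ℤ) + (m.numFaces : ℤ) = 2

/-- Every vertex has degree 4: every `σ`-orbit has size exactly 4. -/
def FourRegular : Prop := ∀ d, (m.σ ^ 4) d = d ∧ (m.σ ^ 2) d ≠ d

/-- A checkerboard coloring: an assignment of a color to each dart which is constant
on faces and such that the two faces on either side of an edge get different colors. -/
def ProperFaceColoring (χ : m.D → Bool) : Prop :=
  (∀ d, χ (m.phi d) = χ d) ∧ (∀ d, χ (m.α d) ≠ χ d)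

end CombMap

namespace CombMap

/-- A diagram is reduced if no vertex is nugatory, i.e. no face is incident to the
same vertex at two opposite corners. -/
def Reduced (m : CombMap) : Prop :=
  ¬ ∃ d : m.D, m.phi.SameCycle d ((m.σ ^ 2) d)

/-- A simple closed curve on the sphere meeting the diagram transversely in exactly
two points, each interior to an edge, bounding a disk.  Combinatorially: the darts
are split into the darts inside the disk and those outside; vertices do not straddle
the curve (`σ` preserves the split) and edges do not straddle it either, except for
the two crossed edges, represented by the darts `d₁, d₂` pointing into the disk. -/
structure TwoPointDisk (m : CombMap) where
  inside : Set m.D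
  d₁ : m.D
  d₂ : m.D
  distinct_points : d₂ ≠ d₁
  σ_closed : ∀ d, m.σ d ∈ inside ↔ d ∈ inside
  α_closed : ∀ d, d ≠ d₁ → d ≠ d₂ → d ≠ m.α d₁ → d ≠ m.α d₂ →
    (m.α d ∈ inside ↔ d ∈ inside)
  crosses₁ : d₁ ∈ inside ∧ m.α d₁ ∉ inside
  crosses₂ : d₂ ∈ inside ∧ m.α d₂ ∉ inside

/-- A face lies entirely inside the disk if all darts of its face cycle are inside. -/
def TwoPointDisk.FaceInside {m : CombMap} (T : m.TwoPointDisk) (d : m.D) : Prop :=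
  ∀ d', m.phi.SameCycle d d' → d' ∈ T.inside

end CombMap

section Aux

open Equiv

/-- Along an orbit of a permutation, if `P` fails at `a` but holds at `(f ^ n) a`,
there is a transition step. -/
lemma CombMap.perm_trans_step {β : Type*} (f : Equiv.Perm β) (P : β → Prop) :
    ∀ (n : ℕ) (a : β), ¬ P a → P ((f ^ n) a) →
      ∃ k : ℕ, ¬ P ((f ^ k) a) ∧ P ((f ^ (k + 1)) a) := by
  intro n
  induction n with
  | zero => intro a ha h; exact absurd (by simpa using h) ha
  | succ n ih =>
    intro a ha h
    by_cases hn : P ((f ^ n) a)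
    · exact ih a ha hn
    · exact ⟨n, hn, h⟩

namespace CombMap

variable {m : CombMap} (T : m.TwoPointDisk)

lemma phi_apply' (d : m.D) : m.phi d = m.σ (m.α d) := rfl

/-- The only inside darts whose `phi`-image is outside are `d₁` and `d₂`. -/
lemma TwoPointDisk.exit_dart {d : m.D} (hd : d ∈ T.inside) (hpd : m.phi d ∉ T.inside) :
    d = T.d₁ ∨ d = T.d₂ := by
  by_contra hcon
  push_neg at hcon
  have h1 : d ≠ m.α T.d₁ := fun h => T.crosses₁.2 (h ▸ hd)
  have h2 : d ≠ m.α T.d₂ := fun h => T.crosses₂.2 (h ▸ hd)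
  have hα : m.α d ∈ T.inside := (T.α_closed d hcon.1 hcon.2 h1 h2).mpr hd
  exact hpd ((T.σ_closed (m.α d)).mpr hα)

/-- The only outside darts whose `phi`-image is inside are `α d₁` and `α d₂`. -/
lemma TwoPointDisk.entry_dart {d : m.D} (hd : d ∉ T.inside) (hpd : m.phi d ∈ T.inside) :
    d = m.α T.d₁ ∨ d = m.α T.d₂ := by
  by_contra hcon
  push_neg at hcon
  have h1 : d ≠ T.d₁ := fun h => hd (h ▸ T.crosses₁.1)
  have h2 : d ≠ T.d₂ := fun h => hd (h ▸ T.crosses₂.1)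
  have hα : m.α d ∉ T.inside := fun h => hd ((T.α_closed d h1 h2 hcon.1 hcon.2).mp h)
  exact hα ((T.σ_closed (m.α d)).mp hpd)

/-- A face containing an inside dart and an outside dart contains `d₁` or `d₂`. -/
lemma TwoPointDisk.exit_sameCycle {a b : m.D} (ha : a ∈ T.inside)
    (hab : m.phi.SameCycle a b) (hb : b ∉ T.inside) :
    m.phi.SameCycle a T.d₁ ∨ m.phi.SameCycle a T.d₂ := by
  obtain ⟨n, -, hn⟩ := hab.exists_pow_eq'
  obtain ⟨k, hk1, hk2⟩ := perm_trans_step m.phi (fun x => x ∉ T.inside) n a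
    (fun h => h ha) (by rw [hn]; exact hb)
  have hx : (m.phi ^ k) a ∈ T.inside := not_not.mp hk1
  have hpx : m.phi ((m.phi ^ k) a) ∉ T.inside := by
    have : (m.phi ^ (k + 1)) a = m.phi ((m.phi ^ k) a) := by
      rw [pow_succ']; rfl
    exact this ▸ hk2
  have hsc : m.phi.SameCycle a ((m.phi ^ k) a) := ⟨(k : ℤ), by rw [zpow_natCast]⟩
  rcases T.exit_dart hx hpx with h | h
  · exact Or.inl (h ▸ hsc)
  · exact Or.inr (h ▸ hsc)

/-- A face containing an inside dart whose `phi`-image is outside must return into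
the disk, through `α d₁` or `α d₂`. -/
lemma TwoPointDisk.entry_sameCycle {a : m.D} (ha : a ∈ T.inside) (hpa : m.phi a ∉ T.inside) :
    m.phi.SameCycle a (m.α T.d₁) ∨ m.phi.SameCycle a (m.α T.d₂) := by
  have hsc : m.phi.SameCycle (m.phi a) a := Equiv.Perm.SameCycle.symm (⟨1, by simp⟩ : m.phi.SameCycle a (m.phi a))
  obtain ⟨n, -, hn⟩ := hsc.exists_pow_eq'
  obtain ⟨k, hk1, hk2⟩ := perm_trans_step m.phi (fun x => x ∈ T.inside) n (m.phi a)
    hpa (by rw [hn]; exact ha)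
  have hpx : m.phi ((m.phi ^ k) (m.phi a)) ∈ T.inside := by
    have : (m.phi ^ (k + 1)) (m.phi a) = m.phi ((m.phi ^ k) (m.phi a)) := by
      rw [pow_succ']; rfl
    exact this ▸ hk2
  have hsc' : m.phi.SameCycle a ((m.phi ^ k) (m.phi a)) := by
    refine ⟨(k : ℤ) + 1, ?_⟩
    rw [zpow_add, zpow_one, zpow_natCast]
    rfl
  rcases T.entry_dart hk1 hpx with h | h
  · exact Or.inl (h ▸ hsc')
  · exact Or.inr (h ▸ hsc')

variable {χ : m.D → Bool}

lemma color_pow (hχ : m.ProperFaceColoring χ) (d : m.D) :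
    ∀ n : ℕ, χ ((m.phi ^ n) d) = χ d := by
  intro n
  induction n with
  | zero => simp
  | succ n ih =>
    have : (m.phi ^ (n + 1)) d = m.phi ((m.phi ^ n) d) := by rw [pow_succ']; rfl
    rw [this, hχ.1, ih]

/-- The coloring is constant on faces. -/
lemma color_sameCycle (hχ : m.ProperFaceColoring χ) {d d' : m.D}
    (h : m.phi.SameCycle d d') : χ d' = χ d := by
  obtain ⟨n, -, hn⟩ := h.exists_pow_eq'
  rw [← hn, color_pow hχ]

lemma color_sigma (hχ : m.ProperFaceColoring χ) (d : m.D) :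
    χ (m.σ d) = χ (m.α d) := by
  have h := hχ.1 (m.α d)
  rwa [phi_apply', m.α_invol] at h

end CombMap

end Aux

/-- Let `D` be a reduced connected checkerboard-colored link diagram on
the sphere, staked with one stake in each shaded (`χ = true`) region.  Every simple
closed curve meeting the diagram transversely in exactly two points and bounding a
disk containing at least one crossing has a stake in its interior: there is a shaded
face lying entirely inside the disk (hence not touching the curve). -/
theorem weakly_prime_checkerboard_staking (m : CombMap) (hconn : m.Connected)
    (hsph : m.Spherical) (hreg : m.FourRegular) (hred : m.Reduced)
    (χ : m.D → Bool) (hχ : m.ProperFaceColoring χ)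
    (T : m.TwoPointDisk)
    (hvert : ∃ d, d ∈ T.inside) :
    ∃ d : m.D, χ d = true ∧ T.FaceInside d := by
  by_contra hcon
  push_neg at hcon
  -- every shaded dart inside the disk lies in a face touching the curve,
  -- hence in the face of `d₁` or of `d₂`
  have touch : ∀ a, a ∈ T.inside → χ a = true →
      m.phi.SameCycle a T.d₁ ∨ m.phi.SameCycle a T.d₂ := by
    intro a ha hca
    have hnf := hcon a hca
    simp only [CombMap.TwoPointDisk.FaceInside, not_forall] at hnf
    obtain ⟨b, hab, hb⟩ := hnf
    exact T.exit_sameCycle ha hab hb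
  -- find a shaded dart `e` inside the disk
  obtain ⟨d0, hd0⟩ := hvert
  obtain ⟨e, he, hce⟩ : ∃ e, e ∈ T.inside ∧ χ e = true := by
    cases hc : χ d0 with
    | true => exact ⟨d0, hd0, hc⟩
    | false =>
      refine ⟨m.σ d0, (T.σ_closed d0).mpr hd0, ?_⟩
      have h1 : χ (m.σ d0) = χ (m.α d0) := CombMap.color_sigma hχ d0
      have h2 : χ (m.α d0) ≠ χ d0 := hχ.2 d0
      rw [h1]
      cases hb : χ (m.α d0)
      · exact absurd (hb.trans hc.symm) h2
      · rfl
  -- the opposite corner `f = σ² e` at the same vertex is also shaded and inside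
  set f := (m.σ ^ 2) e with hf_def
  have hf_eq : f = m.σ (m.σ e) := by rw [hf_def, pow_two]; rfl
  have hf : f ∈ T.inside := by
    rw [hf_eq]
    exact (T.σ_closed _).mpr ((T.σ_closed e).mpr he)
  have hcf : χ f = true := by
    have h1 : χ (m.σ (m.σ e)) = χ (m.α (m.σ e)) := CombMap.color_sigma hχ (m.σ e)
    have h2 : χ (m.α (m.σ e)) ≠ χ (m.σ e) := hχ.2 (m.σ e)
    have h3 : χ (m.σ e) = χ (m.α e) := CombMap.color_sigma hχ e
    have h4 : χ (m.α e) ≠ χ e := hχ.2 e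
    rw [hf_eq, h1]
    cases hb1 : χ (m.α (m.σ e)) <;> cases hb2 : χ (m.α e) <;> simp_all
  -- if `e` and `f` lie on the same face, the vertex is nugatory
  have hef : m.phi.SameCycle e f → False := fun h => hred ⟨e, h⟩
  -- the faces of `d₁` and `d₂` are distinct (else nugatory again through e, f)
  rcases touch e he hce with h1 | h1 <;> rcases touch f hf hcf with h2 | h2
  · exact hef (h1.trans h2.symm)
  · -- e on face of d₁, f on face of d₂
    -- face of d₁ leaves the disk at d₁, so re-enters at α d₁ or α d₂
    have hpd1 : m.phi T.d₁ ∉ T.inside := by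
      rw [CombMap.phi_apply']
      exact fun h => T.crosses₁.2 ((T.σ_closed _).mp h)
    rcases T.entry_sameCycle T.crosses₁.1 hpd1 with h3 | h3
    · -- face of d₁ contains α d₁: color contradiction
      exact hχ.2 T.d₁ (CombMap.color_sameCycle hχ h3)
    · -- face of d₁ contains α d₂, so χ (α d₂) = χ d₁ = true = χ d₂
      have c1 : χ T.d₁ = χ e := CombMap.color_sameCycle hχ h1
      have c2 : χ T.d₂ = χ f := CombMap.color_sameCycle hχ h2
      have c3 : χ (m.α T.d₂) = χ T.d₁ := CombMap.color_sameCycle hχ h3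
      exact hχ.2 T.d₂ (by rw [c3, c1, hce, c2, hcf])
  · -- e on face of d₂, f on face of d₁ : symmetric
    have hpd2 : m.phi T.d₂ ∉ T.inside := by
      rw [CombMap.phi_apply']
      exact fun h => T.crosses₂.2 ((T.σ_closed _).mp h)
    rcases T.entry_sameCycle T.crosses₂.1 hpd2 with h3 | h3
    · have c1 : χ T.d₂ = χ e := CombMap.color_sameCycle hχ h1
      have c2 : χ T.d₁ = χ f := CombMap.color_sameCycle hχ h2
      have c3 : χ (m.α T.d₁) = χ T.d₂ := CombMap.color_sameCycle hχ h3
      exact hχ.2 T.d₁ (by rw [c3, c1, hce, c2, hcf])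
    · exact hχ.2 T.d₂ (CombMap.color_sameCycle hχ h3)
  · exact hef (h1.trans h2.symm)
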